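/- Vanishing corotational rate makes every isotropic scalar invariant stationary: let σ : ℝ → Sym(3) be differentiable at t₀ and suppose there is a skew-symmetric 3×3 real matrix Ω with σ'(t₀) = Ω σ(t₀) − σ(t₀) Ω. Then for every Fréchet differentiable isotropic scalar function I : Sym(3) → ℝ (i.e. I(Qᵀ S Q) = I(S) for all Q ∈ O(3) and S ∈ Sym(3)), one has (d/dt)[I(σ(t))]|_{t₀} = 0. -/

import Mathlib

/-!
Conjugating `S` by the orthogonal matrices `exp (s • Ω)` gives a curve of symmetric matrices
through `S` with velocity `S Ω - Ω S` along which an isotropic `I` is constant, so its derivative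
`φ` annihilates the commutator `Ω S - S Ω`. By the chain rule, `φ` of this commutator is exactly
the derivative of `I ∘ σ` at `t₀`.
-/

open Matrix

noncomputable section

abbrev M3 := Matrix (Fin 3) (Fin 3) ℝ

attribute [local instance] Matrix.frobeniusNormedAddCommGroup Matrix.frobeniusNormedSpace

attribute [local instance] Matrix.frobeniusNormedRing Matrix.frobeniusNormedAlgebra

open NormedSpace

theorem HasFDerivWithinAt.apply_eq_zero_of_const_along {𝕜 E F : Type*}
    [NontriviallyNormedField 𝕜] [NormedAddCommGroup E] [NormedSpace 𝕜 E] [NormedAddCommGroup F]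
    [NormedSpace 𝕜 F]
    {f : E → F} {φ : E →L[𝕜] F} {s : Set E} {c : 𝕜 → E} {v : E} {t : 𝕜}
    (hf : HasFDerivWithinAt f φ s (c t)) (hc : HasDerivAt c v t) (hcs : ∀ u, c u ∈ s)
    (hconst : ∀ u, f (c u) = f (c t)) : φ v = 0 := by
  have hderiv : HasDerivAt (f ∘ c) (φ v) t := hf.comp_hasDerivAt t hc (.of_forall hcs)
  have hconst' : f ∘ c = fun _ => f (c t) := funext hconst
  exact hderiv.unique (hconst' ▸ hasDerivAt_const t (f (c t)))

namespace Matrix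

variable {n 𝕂 : Type*} [Fintype n] [DecidableEq n] [RCLike 𝕂]

theorem transpose_exp_mul_exp_of_transpose_eq_neg {A : Matrix n n 𝕂} (hA : Aᵀ = -A) :
    (exp A)ᵀ * exp A = 1 := by
  rw [← exp_transpose, hA, ← exp_add_of_commute _ _ (Commute.refl A).neg_left, neg_add_cancel,
    exp_zero]

theorem hasDerivAt_transpose_exp_smul_mul_mul_exp_smul (A S : Matrix n n 𝕂) :
    HasDerivAt (fun s : 𝕂 => (exp (s • A))ᵀ * S * exp (s • A)) (Aᵀ * S + S * A) 0 := by
  have hexp : ∀ B : Matrix n n 𝕂, HasDerivAt (fun s : 𝕂 => exp (s • B)) B 0 := fun B => by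
    have h := hasDerivAt_exp_smul_const (𝕂 := 𝕂) B 0
    rw [zero_smul, exp_zero, one_mul] at h
    exact h
  have hexpT : ∀ s : 𝕂, (exp (s • A))ᵀ = exp (s • Aᵀ) := fun s => by
    rw [← exp_transpose, transpose_smul]
  have h := ((hexp Aᵀ).mul_const S).mul (hexp A)
  simp only [zero_smul, exp_zero, one_mul, mul_one] at h
  simp only [hexpT]
  exact h

end Matrix

def IsIsotropic {n β : Type*} [Fintype n] [DecidableEq n] (I : Matrix n n ℝ → β) : Prop :=
  ∀ Q S : Matrix n n ℝ, Qᵀ * Q = 1 → S.IsSymm → I (Qᵀ * S * Q) = I S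

theorem IsIsotropic.apply_commutator_eq_zero_of_hasFDerivWithinAt {n : Type*} [Fintype n]
    [DecidableEq n] {I : Matrix n n ℝ → ℝ} (hiso : IsIsotropic I) {S : Matrix n n ℝ}
    (hS : S.IsSymm)
    {φ : Matrix n n ℝ →L[ℝ] ℝ} (hI : HasFDerivWithinAt I φ {X | X.IsSymm} S)
    {Ω : Matrix n n ℝ} (hΩ : Ωᵀ = -Ω) : φ (Ω * S - S * Ω) = 0 := by
  set c : ℝ → Matrix n n ℝ := fun s => (exp (s • Ω))ᵀ * S * exp (s • Ω)
  have hc0 : c 0 = S := by simp [c]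
  have hcsymm : ∀ s, (c s).IsSymm := fun s => by
    simp only [c, IsSymm, transpose_mul, transpose_transpose, hS.eq, mul_assoc]
  have hconst : ∀ s, I (c s) = I (c 0) := fun s => by
    have hskew : (s • Ω)ᵀ = -(s • Ω) := by rw [transpose_smul, hΩ, smul_neg]
    rw [hc0]
    exact hiso _ S (transpose_exp_mul_exp_of_transpose_eq_neg hskew) hS
  -- The ascription elaborates `φ` with the instances of the statement, so that `map_sub` applies.
  have h : φ (Ωᵀ * S + S * Ω) = 0 := (hc0 ▸ hI).apply_eq_zero_of_const_along
    (hasDerivAt_transpose_exp_smul_mul_mul_exp_smul Ω S) hcsymm hconst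
  rw [hΩ, neg_mul, neg_add_eq_sub, map_sub, sub_eq_zero] at h
  rw [map_sub, h, sub_self]

/-- If the corotational rate of `σ` vanishes at `t₀`, i.e.
`σ'(t₀) = Ω σ(t₀) − σ(t₀) Ω` for some skew-symmetric `Ω`, then every Fréchet
differentiable isotropic scalar invariant `I : Sym(3) → ℝ` is stationary along `σ`. -/
theorem isotropic_invariant_stationary
    (σ : ℝ → M3) (t₀ : ℝ) (hσsym : ∀ t, (σ t).IsSymm)
    (Ω : M3) (hΩ : Ωᵀ = -Ω)
    (hσ : HasDerivAt σ (Ω * σ t₀ - σ t₀ * Ω) t₀)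
    (I : M3 → ℝ)
    (hiso : ∀ (Q S : M3), Qᵀ * Q = 1 → S.IsSymm → I (Qᵀ * S * Q) = I S)
    (φ : M3 →L[ℝ] ℝ)
    (hI : HasFDerivWithinAt I φ {X : M3 | X.IsSymm} (σ t₀)) :
    HasDerivAt (fun t => I (σ t)) 0 t₀ := by
  have hrate : φ (Ω * σ t₀ - σ t₀ * Ω) = 0 :=
    IsIsotropic.apply_commutator_eq_zero_of_hasFDerivWithinAt hiso (hσsym t₀) hI hΩ
  have h : HasDerivAt (fun t => I (σ t)) (φ (Ω * σ t₀ - σ t₀ * Ω)) t₀ :=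
    hI.comp_hasDerivAt t₀ hσ (.of_forall hσsym)
  rwa [hrate] at h
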